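/- If the system (1) has #I distinct solutions x_1, ..., x_N (N = #I), then the set X = {x_1, ..., x_N} is a correct (poised) set for Lagrange interpolation by polynomials of total degree ≤ m, i.e., the evaluation map from span{x^β : β ∈ I} to K^X is bijective. -/

import Mathlib

/-!
For a solution `x`, the monomial vector `v(x) = (x^β)_{β ∈ I}` is a common eigenvector of the
multiplication matrices `A_i`, with eigenvalue `x i`: row `β` of `A_i v(x)` is either the monomial
`x^(β + e_i)` itself or, when `β + e_i` lies on the border, its expression through the system.
Distinct points give distinct eigenvalue tuples, so the `N = #I` vectors `v(x_j)` are linearly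
independent, i.e. the square matrix `(x_j^β)` of the evaluation map is invertible.
-/

open Finset Matrix

/-- Total degree of a multi-index. -/
def mdeg {n : ℕ} (α : Fin n → ℕ) : ℕ := ∑ i, α i

/-- The set `I = {α ∈ ℤ₊ⁿ : |α| ≤ m}` of multi-indices of total degree at most `m`. -/
def Idx (n m : ℕ) : Finset (Fin n → ℕ) :=
  (Fintype.piFinset fun _ => Finset.range (m + 1)).filter fun α => mdeg α ≤ m

/-- `I` is a lower set of multi-indices. -/
def IsLower {n : ℕ} (I : Finset (Fin n → ℕ)) : Prop :=
  ∀ β ∈ I, ∀ γ : Fin n → ℕ, (∀ i, γ i ≤ β i) → γ ∈ I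

/-- `α` belongs to the border `J` of the lower set `I`. -/
def InBorder {n : ℕ} (I : Finset (Fin n → ℕ)) (α : Fin n → ℕ) : Prop :=
  α ∉ I ∧ ∃ β ∈ I, ∃ i : Fin n, α = β + Pi.single i 1

/-- The multiplication matrix `A_i`: its row indexed by `β ∈ I` is the standard basis
vector at `β + e_i` if `β + e_i ∈ I`, and is `(a_{β+e_i,γ})_{γ∈I}` otherwise. -/
def multMat {K : Type*} [Field K] {n : ℕ} (I : Finset (Fin n → ℕ))
    (a : (Fin n → ℕ) → (Fin n → ℕ) → K) (i : Fin n) : Matrix ↥I ↥I K :=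
  fun β γ =>
    if (β : Fin n → ℕ) + Pi.single i 1 ∈ I then
      (if (γ : Fin n → ℕ) = (β : Fin n → ℕ) + Pi.single i 1 then 1 else 0)
    else a ((β : Fin n → ℕ) + Pi.single i 1) γ

/-- The monomial vector `v(x) = (x^β)_{β ∈ I}`. -/
def monVec {K : Type*} [Field K] {n : ℕ} (I : Finset (Fin n → ℕ)) (x : Fin n → K) :
    ↥I → K :=
  fun β => ∏ i, x i ^ (β : Fin n → ℕ) i

/-- `x` is a solution of the system (1): `x^α = Σ_{β∈I} a_{α,β} x^β` for all `|α| = m+1`. -/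
def IsSol {K : Type*} [Field K] {n : ℕ} (m : ℕ)
    (a : (Fin n → ℕ) → (Fin n → ℕ) → K) (x : Fin n → K) : Prop :=
  ∀ α : Fin n → ℕ, mdeg α = m + 1 →
    ∏ i, x i ^ α i = ∑ β ∈ Idx n m, a α β * ∏ i, x i ^ β i

/-- `x` is a solution of the system for a general lower set `I` with border `J`. -/
def IsSolB {K : Type*} [Field K] {n : ℕ} (I : Finset (Fin n → ℕ))
    (a : (Fin n → ℕ) → (Fin n → ℕ) → K) (x : Fin n → K) : Prop :=
  ∀ α : Fin n → ℕ, InBorder I α →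
    ∏ i, x i ^ α i = ∑ β ∈ I, a α β * ∏ i, x i ^ β i

/-- A square matrix is diagonalizable (semisimple). -/
def Diagonalizable {K : Type*} [Field K] {ι : Type*} [Fintype ι] [DecidableEq ι]
    (A : Matrix ι ι K) : Prop :=
  ∃ P : Matrix ι ι K, IsUnit P.det ∧ (P⁻¹ * A * P).IsDiag

/-- The polynomial `P_α = x^α − Σ_{β∈I} a_{α,β} x^β`. -/
noncomputable def Pb {K : Type*} [Field K] {n : ℕ} (I : Finset (Fin n → ℕ))
    (a : (Fin n → ℕ) → (Fin n → ℕ) → K) (α : Fin n → ℕ) : MvPolynomial (Fin n) K :=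
  MvPolynomial.monomial (Finsupp.equivFunOnFinite.symm α) 1 -
    ∑ β ∈ I, MvPolynomial.C (a α β) * MvPolynomial.monomial (Finsupp.equivFunOnFinite.symm β) 1

/-- The ideal generated by the polynomials `P_α`, `α ∈ J`. -/
noncomputable def PIdeal {K : Type*} [Field K] {n : ℕ} (I : Finset (Fin n → ℕ))
    (a : (Fin n → ℕ) → (Fin n → ℕ) → K) : Ideal (MvPolynomial (Fin n) K) :=
  Ideal.span {p | ∃ α : Fin n → ℕ, InBorder I α ∧ p = Pb I a α}

theorem Module.End.linearIndependent_of_mem_eigenspace_pi {ι κ R M : Type*} [CommRing R]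
    [IsDomain R] [AddCommGroup M] [Module R M] [IsTorsionFree R M] (f : ι → End R M)
    {μ : κ → ι → R} (hμ : Function.Injective μ) {v : κ → M} (hv : ∀ j, v j ≠ 0)
    (h : ∀ j i, v j ∈ (f i).eigenspace (μ j i)) : LinearIndependent R v := by
  classical
  rw [linearIndependent_iff']
  intro s
  induction s using Finset.induction_on with
  | empty => simp
  | insert k s hk ih =>
    intro g hg
    have hs : ∀ j ∈ s, g j = 0 := by
      intro j hj
      obtain ⟨i, hi⟩ : ∃ i, μ j i ≠ μ k i := by
        by_contra! hjk
        exact hk (hμ (funext hjk) ▸ hj)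
      have hshift : ∀ l, (f i - μ k i • (1 : End R M)) (v l) = (μ l i - μ k i) • v l := fun l => by
        rw [LinearMap.sub_apply, mem_eigenspace_iff.mp (h l i), sub_smul]; rfl
      have hg' : ∑ l ∈ insert k s, (g l * (μ l i - μ k i)) • v l = 0 := by
        simpa [map_sum, hshift, smul_smul] using congrArg (f i - μ k i • (1 : End R M)) hg
      rw [Finset.sum_insert hk, sub_self, mul_zero, zero_smul, zero_add] at hg'
      exact (mul_eq_zero.mp (ih _ hg' j hj)).resolve_right (sub_ne_zero.mpr hi)
    intro j hj
    rcases Finset.mem_insert.mp hj with rfl | hj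
    · rw [Finset.sum_insert hk, Finset.sum_eq_zero fun l hl => by rw [hs l hl, zero_smul],
        add_zero] at hg
      exact (smul_eq_zero.mp hg).resolve_right (hv j)
    · exact hs j hj

theorem Matrix.mulVec_bijective_of_linearIndependent_row {m n K : Type*} [Field K] [Fintype m]
    [Fintype n] {M : Matrix m n K} (h : LinearIndependent K M.row)
    (hcard : Fintype.card m = Fintype.card n) : Function.Bijective M.mulVec := by
  have hsurj : Function.Surjective M.mulVecLin := by
    rw [← LinearMap.range_eq_top]
    apply Submodule.eq_top_of_finrank_eq
    rw [← Matrix.rank, h.rank_matrix, Module.finrank_fintype_fun_eq_card]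
  have hinj : Function.Injective M.mulVecLin :=
    (LinearMap.injective_iff_surjective_of_finrank_eq_finrank (by simp [hcard])).mpr hsurj
  exact ⟨hinj, hsurj⟩

lemma mem_Idx {n m : ℕ} {β : Fin n → ℕ} : β ∈ Idx n m ↔ mdeg β ≤ m := by
  refine ⟨fun h => (mem_filter.mp h).2, fun h => mem_filter.mpr ⟨?_, h⟩⟩
  refine Fintype.mem_piFinset.mpr fun i => mem_range.mpr (Nat.lt_succ_of_le ?_)
  exact (single_le_sum (fun _ _ => Nat.zero_le _) (mem_univ i)).trans h

lemma zero_mem_Idx (n m : ℕ) : (0 : Fin n → ℕ) ∈ Idx n m :=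
  mem_Idx.mpr (by simp [mdeg])

lemma mdeg_add_single {n : ℕ} (β : Fin n → ℕ) (i : Fin n) :
    mdeg (β + Pi.single i 1) = mdeg β + 1 := by
  simp [mdeg, sum_add_distrib]

lemma prod_pow_add_single {M ι : Type*} [CommMonoid M] [Fintype ι] [DecidableEq ι]
    (x : ι → M) (β : ι → ℕ) (i : ι) :
    ∏ k, x k ^ (β + Pi.single i 1 : ι → ℕ) k = x i * ∏ k, x k ^ β k := by
  simp only [Pi.add_apply, pow_add, prod_mul_distrib]
  simp [Pi.single_apply, mul_comm]

lemma IsSol.isSolB {K : Type*} [Field K] {n m : ℕ} {a : (Fin n → ℕ) → (Fin n → ℕ) → K}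
    {x : Fin n → K} (hx : IsSol m a x) : IsSolB (Idx n m) a x := by
  rintro α ⟨hα, β, hβ, i, rfl⟩
  refine hx _ ?_
  rw [mem_Idx] at hα hβ
  rw [mdeg_add_single] at hα ⊢
  omega

lemma monVec_ne_zero {K : Type*} [Field K] {n : ℕ} {I : Finset (Fin n → ℕ)} (h0 : 0 ∈ I)
    (x : Fin n → K) : monVec I x ≠ 0 := fun hx => by
  simpa [monVec] using congrFun hx ⟨0, h0⟩

lemma multMat_mulVec_monVec {K : Type*} [Field K] {n : ℕ} {I : Finset (Fin n → ℕ)}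
    {a : (Fin n → ℕ) → (Fin n → ℕ) → K} {x : Fin n → K} (hx : IsSolB I a x) (i : Fin n) :
    multMat I a i *ᵥ monVec I x = x i • monVec I x := by
  funext β
  simp only [mulVec, dotProduct, multMat, monVec, Pi.smul_apply, smul_eq_mul,
    ← prod_pow_add_single]
  split_ifs with h
  · rw [sum_eq_single ⟨_, h⟩ (fun γ _ hγ => by rw [if_neg fun e => hγ (Subtype.ext e), zero_mul])
      (by simp)]
    simp
  · rw [hx _ ⟨h, β, β.2, i, rfl⟩]
    exact sum_coe_sort I fun γ => a ((β : Fin n → ℕ) + Pi.single i 1) γ * ∏ k, x k ^ γ k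

/-- If the system has `#I` distinct solutions, then the set of these solutions is a
correct (poised) set for Lagrange interpolation by polynomials of total degree `≤ m`:
the evaluation map from `span{x^β : β ∈ I}` to `K^X` is bijective. -/
theorem stmt_19 {K : Type*} [Field K] {n m N : ℕ} (hN : N = (Idx n m).card)
    (a : (Fin n → ℕ) → (Fin n → ℕ) → K) (x : Fin N → (Fin n → K)) (hinj : Function.Injective x)
    (hsol : ∀ j, IsSol m a (x j)) :
    Function.Bijective fun (c : ↥(Idx n m) → K) (j : Fin N) =>
      ∑ β : ↥(Idx n m), c β * ∏ i, (x j) i ^ (β : Fin n → ℕ) i := by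
  have hli : LinearIndependent K fun j => monVec (Idx n m) (x j) :=
    Module.End.linearIndependent_of_mem_eigenspace_pi (fun i => (multMat (Idx n m) a i).mulVecLin)
      hinj (fun j => monVec_ne_zero (zero_mem_Idx n m) (x j)) fun j i =>
        Module.End.mem_eigenspace_iff.mpr (multMat_mulVec_monVec (hsol j).isSolB i)
  have heval : (fun (c : ↥(Idx n m) → K) (j : Fin N) =>
      ∑ β : ↥(Idx n m), c β * ∏ i, (x j) i ^ (β : Fin n → ℕ) i) =
      (Matrix.of fun j => monVec (Idx n m) (x j)).mulVec := by
    ext c j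
    simp only [mulVec, dotProduct, of_apply, monVec, mul_comm]
  rw [heval]
  exact Matrix.mulVec_bijective_of_linearIndependent_row hli (by simp [hN])
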